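/- arXiv:1611.09166 — 6 statements merged into one kernel-verified Lean document; each statement's English description precedes it below -/
import Mathlib

section
/- For any infinite subset P of the natural numbers, the set H_P(T) = {S : T^{-n} S T^n → I as n → ∞ along n ∈ P} is a group under composition. -/
open MeasureTheory Filter Topology

variable {X : Type*} [MeasurableSpace X]

/-- The conjugate `T^{-n} S T^n` of `S` by the `n`-th power of `T` (with inverse `Tinv`),
as a point map. -/
def conjMap (T Tinv S : X → X) (n : ℕ) : X → X :=
  fun x => Tinv^[n] (S (T^[n] x))

/-- `S` is homoclinic for `T` along the filter `L` : the Koopman operators of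
`T^{-n} S T^n` converge strongly to the identity on `L²(X, μ)` along `L`. -/
def HomoclinicAlong (μ : Measure X) (T Tinv S : X → X) (L : Filter ℕ) : Prop :=
  ∀ f : X → ℝ, MemLp f 2 μ →
    Tendsto (fun n => eLpNorm (fun x => f (conjMap T Tinv S n x) - f x) 2 μ) L (𝓝 0)

/-- `S` is an invertible measure-preserving transformation of `(X, μ)`. -/
def InvMP (μ : Measure X) (S : X → X) : Prop :=
  MeasurePreserving S μ μ ∧
    ∃ Sinv : X → X, MeasurePreserving Sinv μ μ ∧
      Function.LeftInverse Sinv S ∧ Function.RightInverse Sinv S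

/-!
Conjugation by `T^n` is a group homomorphism `S ↦ T^{-n} S T^n`, and each conjugate is measure
preserving. For a measure-preserving `φ`, the displacement `‖f ∘ φ - f‖₂` is subadditive under
composition (write `f ∘ φ ∘ ψ - f = (f ∘ φ - f) ∘ ψ + (f ∘ ψ - f)` and use invariance of the
norm under `ψ`) and is the same for `φ` and its inverse (precompose with `φ`). Hence the
displacements of the conjugates of `S₁ ∘ S₂` and of `S⁻¹` are controlled by those of `S₁`, `S₂`
and `S`, along any filter of times.
-/

open scoped ENNReal

section Displacement

variable {α E : Type*} [MeasurableSpace α] [NormedAddCommGroup E] {μ : Measure α}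
  {p : ℝ≥0∞} {f : α → E} {φ ψ : α → α}

lemma eLpNorm_comp_comp_sub_le (hf : AEStronglyMeasurable f μ) (hφ : MeasurePreserving φ μ μ)
    (hψ : MeasurePreserving ψ μ μ) (hp : 1 ≤ p) :
    eLpNorm (fun x => f (φ (ψ x)) - f x) p μ ≤
      eLpNorm (fun x => f (φ x) - f x) p μ + eLpNorm (fun x => f (ψ x) - f x) p μ := by
  have hφf : AEStronglyMeasurable (fun x => f (φ x) - f x) μ :=
    (hf.comp_measurePreserving hφ).sub hf
  have hψf : AEStronglyMeasurable (fun x => f (ψ x) - f x) μ :=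
    (hf.comp_measurePreserving hψ).sub hf
  have hsplit : (fun x => f (φ (ψ x)) - f x) =
      (fun x => f (φ x) - f x) ∘ ψ + fun x => f (ψ x) - f x := by
    funext x
    simp only [Pi.add_apply, Function.comp_apply, sub_add_sub_cancel]
  calc eLpNorm (fun x => f (φ (ψ x)) - f x) p μ
      ≤ eLpNorm ((fun x => f (φ x) - f x) ∘ ψ) p μ + eLpNorm (fun x => f (ψ x) - f x) p μ := by
        rw [hsplit]
        exact eLpNorm_add_le (hφf.comp_measurePreserving hψ) hψf hp
    _ = eLpNorm (fun x => f (φ x) - f x) p μ + eLpNorm (fun x => f (ψ x) - f x) p μ := by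
        rw [eLpNorm_comp_measurePreserving hφf hψ]

lemma eLpNorm_comp_sub_eq_of_leftInverse (hf : AEStronglyMeasurable f μ)
    (hφ : MeasurePreserving φ μ μ) (hψ : MeasurePreserving ψ μ μ) (h : Function.LeftInverse ψ φ) :
    eLpNorm (fun x => f (ψ x) - f x) p μ = eLpNorm (fun x => f (φ x) - f x) p μ := by
  have hψf : AEStronglyMeasurable (fun x => f (ψ x) - f x) μ :=
    (hf.comp_measurePreserving hψ).sub hf
  have hneg : (fun x => f (ψ x) - f x) ∘ φ = -fun x => f (φ x) - f x := by
    funext x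
    simp only [Function.comp_apply, h x, Pi.neg_apply, neg_sub]
  rw [← eLpNorm_comp_measurePreserving hψf hφ, hneg, eLpNorm_neg]

end Displacement

section Conjugation

variable {α : Type*} {T Tinv : α → α}

lemma conjMap_measurePreserving [MeasurableSpace α] {μ : Measure α} {S : α → α}
    (hT : MeasurePreserving T μ μ) (hTinv : MeasurePreserving Tinv μ μ)
    (hS : MeasurePreserving S μ μ) (n : ℕ) :
    MeasurePreserving (conjMap T Tinv S n) μ μ :=
  (hTinv.iterate n).comp (hS.comp (hT.iterate n))

lemma conjMap_id (hTl : Function.LeftInverse Tinv T) (n : ℕ) : conjMap T Tinv id n = id :=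
  funext fun x => hTl.iterate n x

lemma conjMap_comp (hTr : Function.RightInverse Tinv T) (S₁ S₂ : α → α) (n : ℕ) :
    conjMap T Tinv (S₁ ∘ S₂) n = conjMap T Tinv S₁ n ∘ conjMap T Tinv S₂ n := by
  funext x
  simp only [conjMap, Function.comp_apply, hTr.iterate n (S₂ (T^[n] x))]

lemma conjMap_leftInverse (hTl : Function.LeftInverse Tinv T) (hTr : Function.RightInverse Tinv T)
    {S Sinv : α → α} (hS : Function.LeftInverse Sinv S) (n : ℕ) :
    Function.LeftInverse (conjMap T Tinv Sinv n) (conjMap T Tinv S n) :=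
  congrFun (by rw [← Function.comp_def, ← conjMap_comp hTr, hS.comp_eq_id, conjMap_id hTl]; rfl)

end Conjugation

section Homoclinic

variable {μ : Measure X} {T Tinv : X → X} {L : Filter ℕ}

lemma homoclinicAlong_id (hTl : Function.LeftInverse Tinv T) : HomoclinicAlong μ T Tinv id L := by
  intro f _
  simp only [conjMap_id hTl, id, sub_self, eLpNorm_zero']
  exact tendsto_const_nhds

lemma HomoclinicAlong.comp (hT : MeasurePreserving T μ μ) (hTinv : MeasurePreserving Tinv μ μ)
    (hTr : Function.RightInverse Tinv T) {S₁ S₂ : X → X} (hS₁ : MeasurePreserving S₁ μ μ)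
    (hS₂ : MeasurePreserving S₂ μ μ) (h₁ : HomoclinicAlong μ T Tinv S₁ L)
    (h₂ : HomoclinicAlong μ T Tinv S₂ L) : HomoclinicAlong μ T Tinv (S₁ ∘ S₂) L := by
  intro f hf
  have hsum := (h₁ f hf).add (h₂ f hf)
  rw [add_zero] at hsum
  refine tendsto_of_tendsto_of_tendsto_of_le_of_le tendsto_const_nhds hsum (fun _ => zero_le)
    fun n => ?_
  rw [conjMap_comp hTr]
  exact eLpNorm_comp_comp_sub_le hf.1 (conjMap_measurePreserving hT hTinv hS₁ n)
    (conjMap_measurePreserving hT hTinv hS₂ n) one_le_two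

lemma HomoclinicAlong.of_leftInverse (hT : MeasurePreserving T μ μ)
    (hTinv : MeasurePreserving Tinv μ μ) (hTl : Function.LeftInverse Tinv T)
    (hTr : Function.RightInverse Tinv T) {S Sinv : X → X}
    (hS : MeasurePreserving S μ μ) (hSinv : MeasurePreserving Sinv μ μ)
    (hSl : Function.LeftInverse Sinv S) (h : HomoclinicAlong μ T Tinv S L) :
    HomoclinicAlong μ T Tinv Sinv L := by
  intro f hf
  refine (h f hf).congr fun n => ?_
  exact (eLpNorm_comp_sub_eq_of_leftInverse hf.1 (conjMap_measurePreserving hT hTinv hS n)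
    (conjMap_measurePreserving hT hTinv hSinv n) (conjMap_leftInverse hTl hTr hSl n)).symm

end Homoclinic

theorem homoclinicAlongP_is_group_general (μ : Measure X)
    (T Tinv : X → X) (hT : MeasurePreserving T μ μ) (hTinv : MeasurePreserving Tinv μ μ)
    (hTl : Function.LeftInverse Tinv T) (hTr : Function.RightInverse Tinv T)
    (P : Set ℕ) :
    (HomoclinicAlong μ T Tinv id (atTop ⊓ 𝓟 P)) ∧
    (∀ S₁ S₂ : X → X, InvMP μ S₁ → InvMP μ S₂ →
      HomoclinicAlong μ T Tinv S₁ (atTop ⊓ 𝓟 P) → HomoclinicAlong μ T Tinv S₂ (atTop ⊓ 𝓟 P) →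
      HomoclinicAlong μ T Tinv (S₁ ∘ S₂) (atTop ⊓ 𝓟 P)) ∧
    (∀ S Sinv : X → X, InvMP μ S → MeasurePreserving Sinv μ μ →
      Function.LeftInverse Sinv S → Function.RightInverse Sinv S →
      HomoclinicAlong μ T Tinv S (atTop ⊓ 𝓟 P) → HomoclinicAlong μ T Tinv Sinv (atTop ⊓ 𝓟 P)) :=
  ⟨homoclinicAlong_id hTl,
    fun _ _ hS₁ hS₂ h₁ h₂ => h₁.comp hT hTinv hTr hS₁.1 hS₂.1 h₂,
    fun _ _ hS hSinv hSl _ h => h.of_leftInverse hT hTinv hTl hTr hS.1 hSinv hSl⟩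

/-- For any infinite `P ⊆ ℕ`, the homoclinic set `H_P(T)` is a group under composition:
it contains the identity, is closed under composition, and closed under inverses. -/
theorem homoclinicAlongP_is_group (μ : Measure X) [IsProbabilityMeasure μ]
    (T Tinv : X → X) (hT : MeasurePreserving T μ μ) (hTinv : MeasurePreserving Tinv μ μ)
    (hTl : Function.LeftInverse Tinv T) (hTr : Function.RightInverse Tinv T)
    (P : Set ℕ) (hP : P.Infinite) :
    (HomoclinicAlong μ T Tinv id (atTop ⊓ 𝓟 P)) ∧
    (∀ S₁ S₂ : X → X, InvMP μ S₁ → InvMP μ S₂ →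
      HomoclinicAlong μ T Tinv S₁ (atTop ⊓ 𝓟 P) → HomoclinicAlong μ T Tinv S₂ (atTop ⊓ 𝓟 P) →
      HomoclinicAlong μ T Tinv (S₁ ∘ S₂) (atTop ⊓ 𝓟 P)) ∧
    (∀ S Sinv : X → X, InvMP μ S → MeasurePreserving Sinv μ μ →
      Function.LeftInverse Sinv S → Function.RightInverse Sinv S →
      HomoclinicAlong μ T Tinv S (atTop ⊓ 𝓟 P) → HomoclinicAlong μ T Tinv Sinv (atTop ⊓ 𝓟 P)) :=
  homoclinicAlongP_is_group_general μ T Tinv hT hTinv hTl hTr P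
end

section
/- The σ-algebra of sets fixed by every element of H_P(T) is T-invariant: if a measurable set A satisfies μ(S A Δ A) = 0 for all S ∈ H_P(T), then T A also satisfies μ(S (T A) Δ T A) = 0 for all S ∈ H_P(T). -/
/-!
If `S ∈ H_P(T)` then so is `T⁻¹ S T`: its `n`-th conjugate is `T⁻¹ (T^{-n} S T^n) T`, and the
Koopman operator of `T` is an isometry of `L²`. Hence `T⁻¹ S T` fixes `A`, i.e. `S` fixes `T A`.
-/

open MeasureTheory Filter Topology

variable {X : Type*} [MeasurableSpace X]

open scoped symmDiff

lemma conjMap_conj_apply {X : Type*} (T Tinv S : X → X) (n : ℕ) (x : X) :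
    conjMap T Tinv (Tinv ∘ S ∘ T) n x = Tinv (conjMap T Tinv S n (T x)) := by
  simp only [conjMap, Function.comp_apply, ← Function.iterate_succ_apply' Tinv,
    ← Function.iterate_succ_apply' T, Function.iterate_succ_apply]

lemma MeasureTheory.MeasurePreserving.conjMap {μ : Measure X} {T Tinv S : X → X}
    (hT : MeasurePreserving T μ μ) (hTinv : MeasurePreserving Tinv μ μ)
    (hS : MeasurePreserving S μ μ) (n : ℕ) : MeasurePreserving (conjMap T Tinv S n) μ μ :=
  (hTinv.iterate n).comp (hS.comp (hT.iterate n))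

section Conjugation

variable {μ : Measure X} {T Tinv S : X → X}

lemma InvMP.conj (hT : MeasurePreserving T μ μ) (hTinv : MeasurePreserving Tinv μ μ)
    (hTl : Function.LeftInverse Tinv T) (hTr : Function.RightInverse Tinv T)
    (hS : InvMP μ S) : InvMP μ (Tinv ∘ S ∘ T) := by
  obtain ⟨hSmp, Sinv, hSinv, hSl, hSr⟩ := hS
  refine ⟨hTinv.comp (hSmp.comp hT), Tinv ∘ Sinv ∘ T, hTinv.comp (hSinv.comp hT), ?_, ?_⟩
  · intro x
    simp only [Function.comp_apply, hTr _, hSl _, hTl x]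
  · intro x
    simp only [Function.comp_apply, hTr _, hSr _, hTl x]

lemma HomoclinicAlong.conj {L : Filter ℕ} (hT : MeasurePreserving T μ μ)
    (hTinv : MeasurePreserving Tinv μ μ) (hTl : Function.LeftInverse Tinv T)
    (hS : MeasurePreserving S μ μ) (hH : HomoclinicAlong μ T Tinv S L) :
    HomoclinicAlong μ T Tinv (Tinv ∘ S ∘ T) L := by
  intro f hf
  have hfTinv : MemLp (f ∘ Tinv) 2 μ := hf.comp_measurePreserving hTinv
  refine (hH (f ∘ Tinv) hfTinv).congr fun n => ?_
  have hdiff : (fun x => f (conjMap T Tinv (Tinv ∘ S ∘ T) n x) - f x)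
      = (fun x => (f ∘ Tinv) (conjMap T Tinv S n x) - (f ∘ Tinv) x) ∘ T := by
    funext x
    simp only [Function.comp_apply, conjMap_conj_apply, hTl x]
  rw [hdiff, eLpNorm_comp_measurePreserving _ hT]
  exact (hfTinv.comp_measurePreserving (hT.conjMap hTinv hS n)).aestronglyMeasurable.sub
    hfTinv.aestronglyMeasurable

lemma measure_symmDiff_preimage_conj (hT : MeasurePreserving T μ μ)
    (hTinv : MeasurePreserving Tinv μ μ) (hTl : Function.LeftInverse Tinv T)
    (hS : MeasurePreserving S μ μ) {A : Set X} (hA : MeasurableSet A) :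
    μ ((S ⁻¹' (Tinv ⁻¹' A)) ∆ (Tinv ⁻¹' A)) = μ (((Tinv ∘ S ∘ T) ⁻¹' A) ∆ A) := by
  have hTA : MeasurableSet (Tinv ⁻¹' A) := hTinv.measurable hA
  have hpre : T ⁻¹' ((S ⁻¹' (Tinv ⁻¹' A)) ∆ (Tinv ⁻¹' A)) = ((Tinv ∘ S ∘ T) ⁻¹' A) ∆ A := by
    ext x
    simp only [Set.preimage_symmDiff, Set.mem_symmDiff, Set.mem_preimage, Function.comp_apply,
      hTl x]
  rw [← hpre, hT.measure_preimage ((hS.measurable hTA).symmDiff hTA).nullMeasurableSet]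

end Conjugation

theorem fixed_algebra_T_invariant_general (μ : Measure X)
    (T Tinv : X → X) (hT : MeasurePreserving T μ μ) (hTinv : MeasurePreserving Tinv μ μ)
    (hTl : Function.LeftInverse Tinv T) (hTr : Function.RightInverse Tinv T)
    (P : Set ℕ)
    (A : Set X) (hA : MeasurableSet A)
    (hfix : ∀ S : X → X, InvMP μ S → HomoclinicAlong μ T Tinv S (atTop ⊓ 𝓟 P) →
      μ ((S ⁻¹' A) ∆ A) = 0) :
    ∀ S : X → X, InvMP μ S → HomoclinicAlong μ T Tinv S (atTop ⊓ 𝓟 P) →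
      μ ((S ⁻¹' (Tinv ⁻¹' A)) ∆ (Tinv ⁻¹' A)) = 0 := by
  intro S hS hH
  rw [measure_symmDiff_preimage_conj hT hTinv hTl hS.1 hA]
  exact hfix _ (hS.conj hT hTinv hTl hTr) (hH.conj hT hTinv hTl hS.1)

/-- The σ-algebra of sets fixed by every element of `H_P(T)` is `T`-invariant: if `A` is
fixed mod `μ` by every `S ∈ H_P(T)`, then so is `T A` (written as `Tinv ⁻¹' A`). -/
theorem fixed_algebra_T_invariant (μ : Measure X) [IsProbabilityMeasure μ]
    (T Tinv : X → X) (hT : MeasurePreserving T μ μ) (hTinv : MeasurePreserving Tinv μ μ)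
    (hTl : Function.LeftInverse Tinv T) (hTr : Function.RightInverse Tinv T)
    (P : Set ℕ) (hP : P.Infinite)
    (A : Set X) (hA : MeasurableSet A)
    (hfix : ∀ S : X → X, InvMP μ S → HomoclinicAlong μ T Tinv S (atTop ⊓ 𝓟 P) →
      μ ((S ⁻¹' A) ∆ A) = 0) :
    ∀ S : X → X, InvMP μ S → HomoclinicAlong μ T Tinv S (atTop ⊓ 𝓟 P) →
      μ ((S ⁻¹' (Tinv ⁻¹' A)) ∆ (Tinv ⁻¹' A)) = 0 :=
  fixed_algebra_T_invariant_general μ T Tinv hT hTinv hTl hTr P A hA hfix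
end

section
/- Let T be an invertible measure-preserving transformation of a probability space. If any joining limit measure ν on X^{k+1} (obtained as a limit of μ(B ∩ T^{m_i^1}B_1 ∩ … ∩ T^{m_i^k}B_k) over product sets, with m_i^j ∈ P tending to infinity) is invariant under S × Id × … × Id for every S in an ergodic group H_P(T), and its projection onto the last k coordinates is μ^k, then ν = μ^{k+1}. -/
open MeasureTheory Filter Topology

variable {X : Type*} [MeasurableSpace X]

open scoped symmDiff ENNReal

/-! An invariant measure `ρ ≪ μ` of an ergodic family has an invariant density `dρ/dμ`, which
ergodicity forces to be a constant `c`, so `ρ = c • μ`. Applied to `A ↦ ν (A ×ˢ B)`, which is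
dominated by the first marginal `μ` and invariant because `ν` is invariant under `S × id`, this
gives `ν (A ×ˢ B) = c_B * μ A`, and `A = univ` identifies `c_B` with the second marginal of `B`. -/

theorem InvMP.measurableEmbedding {μ : Measure X} {S : X → X} (hS : InvMP μ S) :
    MeasurableEmbedding S := by
  obtain ⟨hSm, Sinv, hSinv, hl, hr⟩ := hS
  exact (MeasurableEquiv.mk ⟨S, Sinv, hl, hr⟩ hSm.measurable hSinv.measurable).measurableEmbedding

theorem rnDeriv_comp_ae_eq_of_map_eq {ρ μ : Measure X} [SigmaFinite ρ] [SigmaFinite μ]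
    {S : X → X} (hS : MeasurableEmbedding S) (hρ : ρ.map S = ρ) (hμ : μ.map S = μ) :
    ρ.rnDeriv μ ∘ S =ᵐ[μ] ρ.rnDeriv μ := by
  simpa [hρ, hμ, Function.comp_def] using hS.rnDeriv_map ρ μ

theorem map_fst_restrict_preimage_snd_apply {Y : Type*} [MeasurableSpace Y]
    (ν : Measure (X × Y)) {A : Set X} (hA : MeasurableSet A) (B : Set Y) :
    (ν.restrict (Prod.snd ⁻¹' B)).map Prod.fst A = ν (A ×ˢ B) := by
  rw [Measure.map_apply measurable_fst hA, Measure.restrict_apply (measurable_fst hA),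
    Set.prod_eq]

theorem map_map_fst_restrict_preimage_snd_of_map_prodMap_eq {Y : Type*} [MeasurableSpace Y]
    {ν : Measure (X × Y)} {S : X → X} (hS : Measurable S) {B : Set Y} (hB : MeasurableSet B)
    (hν : ν.map (Prod.map S id) = ν) :
    ((ν.restrict (Prod.snd ⁻¹' B)).map Prod.fst).map S =
      (ν.restrict (Prod.snd ⁻¹' B)).map Prod.fst := by
  have hSid : Measurable (Prod.map S (id : Y → Y)) := hS.prodMap measurable_id
  calc ((ν.restrict (Prod.snd ⁻¹' B)).map Prod.fst).map S
      = ((ν.restrict (Prod.map S id ⁻¹' (Prod.snd ⁻¹' B))).map (Prod.map S id)).map Prod.fst := by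
        rw [Measure.map_map hS measurable_fst, Measure.map_map measurable_fst hSid]; rfl
    _ = (ν.restrict (Prod.snd ⁻¹' B)).map Prod.fst := by
        rw [← Measure.restrict_map hSid (measurable_snd hB), hν]

def IsErgodicFamily (μ : Measure X) (G : (X → X) → Prop) : Prop :=
  ∀ A : Set X, MeasurableSet A → (∀ S, G S → μ ((S ⁻¹' A) ∆ A) = 0) → μ A = 0 ∨ μ A = 1

namespace IsErgodicFamily

variable {μ : Measure X} {G : (X → X) → Prop}

theorem ae_eq_const_of_ae_eq_comp [IsProbabilityMeasure μ] (hG : IsErgodicFamily μ G)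
    {Y : Type*} [MeasurableSpace Y] [Nonempty Y] [MeasurableSpace.CountablySeparated Y]
    {f : X → Y} (hf : Measurable f) (hfG : ∀ S, G S → f ∘ S =ᵐ[μ] f) :
    ∃ c, f =ᵐ[μ] Function.const X c := by
  refine exists_eventuallyEq_const_of_forall_separating MeasurableSet fun U hU => ?_
  have hinvU : ∀ S, G S → μ ((S ⁻¹' (f ⁻¹' U)) ∆ (f ⁻¹' U)) = 0 := fun S hS =>
    measure_symmDiff_eq_zero_iff.2 <| (hfG S hS).mono fun x hx => congrArg (· ∈ U) hx
  rcases hG (f ⁻¹' U) (hf hU) hinvU with h | h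
  · exact Or.inr (measure_eq_zero_iff_ae_notMem.1 h)
  · exact Or.inl ((ae_iff_measure_eq (hf hU).nullMeasurableSet).2 (h.trans measure_univ.symm))

theorem exists_eq_smul_of_map_eq [IsProbabilityMeasure μ] (hG : IsErgodicFamily μ G)
    (hGμ : ∀ S, G S → MeasurePreserving S μ μ ∧ MeasurableEmbedding S)
    {ρ : Measure X} [SigmaFinite ρ] (hρμ : ρ ≪ μ) (hρ : ∀ S, G S → ρ.map S = ρ) :
    ∃ c : ℝ≥0∞, ρ = c • μ := by
  obtain ⟨c, hc⟩ := hG.ae_eq_const_of_ae_eq_comp (Measure.measurable_rnDeriv ρ μ) fun S hS =>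
    rnDeriv_comp_ae_eq_of_map_eq (hGμ S hS).2 (hρ S hS) (hGμ S hS).1.map_eq
  refine ⟨c, ?_⟩
  rw [← Measure.withDensity_rnDeriv_eq ρ μ hρμ, withDensity_congr_ae hc]
  exact withDensity_const c

theorem eq_prod_of_map_prodMap_eq [IsProbabilityMeasure μ] (hG : IsErgodicFamily μ G)
    (hGμ : ∀ S, G S → MeasurePreserving S μ μ ∧ MeasurableEmbedding S)
    {Y : Type*} [MeasurableSpace Y] {ν : Measure (X × Y)} [IsFiniteMeasure ν]
    (hfst : ν.map Prod.fst = μ) (hinv : ∀ S, G S → ν.map (Prod.map S id) = ν) :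
    ν = μ.prod (ν.map Prod.snd) := by
  refine (Measure.prod_eq fun A B hA hB => ?_).symm
  have hρμ : (ν.restrict (Prod.snd ⁻¹' B)).map Prod.fst ≪ μ :=
    hfst ▸ (Measure.map_mono Measure.restrict_le_self measurable_fst).absolutelyContinuous
  obtain ⟨c, hc⟩ := hG.exists_eq_smul_of_map_eq hGμ hρμ fun S hS =>
    map_map_fst_restrict_preimage_snd_of_map_prodMap_eq (hGμ S hS).1.measurable hB (hinv S hS)
  have hslice : ∀ s, MeasurableSet s → ν (s ×ˢ B) = c * μ s := fun s hs => by
    rw [← map_fst_restrict_preimage_snd_apply ν hs, hc, Measure.smul_apply, smul_eq_mul]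
  rw [hslice A hA, Measure.map_apply measurable_snd hB, ← Set.univ_prod,
    hslice Set.univ MeasurableSet.univ, measure_univ, mul_one, mul_comm]

end IsErgodicFamily

theorem joining_of_ergodic_homoclinic_invariance_general
    (μ : Measure X) [IsProbabilityMeasure μ]
    (T Tinv : X → X)
    (P : Set ℕ)
    (herg : ∀ A : Set X, MeasurableSet A →
      (∀ S : X → X, InvMP μ S → HomoclinicAlong μ T Tinv S (atTop ⊓ 𝓟 P) →
        μ ((S ⁻¹' A) ∆ A) = 0) → μ A = 0 ∨ μ A = 1)
    (k : ℕ) (ν : Measure (X × (Fin k → X))) [IsProbabilityMeasure ν]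
    (hfst : ν.map Prod.fst = μ)
    (hsnd : ν.map Prod.snd = Measure.pi (fun _ : Fin k => μ))
    (hinv : ∀ S : X → X, InvMP μ S → HomoclinicAlong μ T Tinv S (atTop ⊓ 𝓟 P) →
      ν.map (Prod.map S id) = ν) :
    ν = μ.prod (Measure.pi (fun _ : Fin k => μ)) := by
  have hG : IsErgodicFamily μ fun S => InvMP μ S ∧ HomoclinicAlong μ T Tinv S (atTop ⊓ 𝓟 P) :=
    fun A hA hA_inv => herg A hA fun S hS hSH => hA_inv S ⟨hS, hSH⟩
  rw [← hsnd]
  exact hG.eq_prod_of_map_prodMap_eq (fun S hS => ⟨hS.1.1, hS.1.measurableEmbedding⟩) hfst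
    fun S hS => hinv S hS.1 hS.2

/-- If a measure `ν` on `X^{k+1} = X × X^k` has first marginal `μ`, marginal `μ^k` on the
last `k` coordinates, and is invariant under `S × Id` for every `S` in the ergodic group
`H_P(T)`, then `ν = μ^{k+1}`. -/
theorem joining_of_ergodic_homoclinic_invariance [StandardBorelSpace X]
    (μ : Measure X) [IsProbabilityMeasure μ]
    (T Tinv : X → X) (hT : MeasurePreserving T μ μ) (hTinv : MeasurePreserving Tinv μ μ)
    (hTl : Function.LeftInverse Tinv T) (hTr : Function.RightInverse Tinv T)
    (P : Set ℕ) (hP : P.Infinite)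
    (herg : ∀ A : Set X, MeasurableSet A →
      (∀ S : X → X, InvMP μ S → HomoclinicAlong μ T Tinv S (atTop ⊓ 𝓟 P) →
        μ ((S ⁻¹' A) ∆ A) = 0) → μ A = 0 ∨ μ A = 1)
    (k : ℕ) (ν : Measure (X × (Fin k → X))) [IsProbabilityMeasure ν]
    (hfst : ν.map Prod.fst = μ)
    (hsnd : ν.map Prod.snd = Measure.pi (fun _ : Fin k => μ))
    (hinv : ∀ S : X → X, InvMP μ S → HomoclinicAlong μ T Tinv S (atTop ⊓ 𝓟 P) →
      ν.map (Prod.map S id) = ν) :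
    ν = μ.prod (Measure.pi (fun _ : Fin k => μ)) :=
  joining_of_ergodic_homoclinic_invariance_general μ T Tinv P herg k ν hfst hsnd hinv
end

section
/- If T is a mixing invertible measure-preserving transformation of a probability space with ergodic homoclinic group H(T), then T is mixing of all orders: for measurable sets B_0, …, B_k and sequences 0 = m_i^0 < m_i^1 < … < m_i^k with all gaps m_i^{j+1} − m_i^j → ∞, μ(B_0 ∩ T^{m_i^1}B_1 ∩ … ∩ T^{m_i^k}B_k) → μ(B_0)⋯μ(B_k). -/
open MeasureTheory Filter Topology

variable {X : Type*} [MeasurableSpace X]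

open scoped symmDiff

/-!
Induct on `k` and put `D i = ⋂_{j ≥ 1} T^{m_j^i} B_j`; by induction and the `T`-invariance
of `μ`, `μ (D i) → ∏_{j ≥ 1} μ (B_j)`. The indicators of the `D i` are bounded in `L²`, so
along any ultrafilter they converge weakly to some `g`. For `S ∈ H(T)` we have
`S⁻¹ (T^m B) = T^m ((T^{-m} S T^m)⁻¹ B)` with `T^{-m} S T^m → id` strongly, and all
`m_j^i → ∞`, so `μ (A ∩ D i) - μ (S⁻¹ A ∩ D i) → 0`. Hence `∫_{S⁻¹ A} g = ∫_A g`: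
`g` is `H(T)`-invariant, so by ergodicity it is a.e. the constant `lim μ (D i)`, and
then `μ (B_0 ∩ D i) → μ (B_0) ∏_{j ≥ 1} μ (B_j)`.
-/

open scoped ENNReal

theorem Set.iInter_symmDiff_iInter_subset {α ι : Type*} (f g : ι → Set α) :
    (⋂ i, f i) ∆ (⋂ i, g i) ⊆ ⋃ i, f i ∆ g i :=
  calc (⋂ i, f i) ∆ (⋂ i, g i) = (⋃ i, (f i)ᶜ) ∆ (⋃ i, (g i)ᶜ) := by
        rw [← compl_symmDiff_compl, Set.compl_iInter, Set.compl_iInter]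
    _ ⊆ ⋃ i, (f i)ᶜ ∆ (g i)ᶜ := Set.iUnion_symmDiff_iUnion_subset
    _ = ⋃ i, f i ∆ g i := by simp only [compl_symmDiff_compl]

theorem exists_tendsto_inner_of_norm_le {E ι : Type*} [NormedAddCommGroup E]
    [InnerProductSpace ℝ E] [CompleteSpace E] (𝒰 : Ultrafilter ι) {v : ι → E} {C : ℝ}
    (hv : ∀ i, ‖v i‖ ≤ C) :
    ∃ g : E, ∀ h, Tendsto (fun i => inner ℝ (v i) h) 𝒰 (𝓝 (inner ℝ g h)) := by
  have hlim : ∀ h : E, ∃ a ∈ Metric.closedBall 0 (C * ‖h‖),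
      Tendsto (fun i => inner ℝ (v i) h) 𝒰 (𝓝 a) := fun h =>
    (isCompact_closedBall 0 (C * ‖h‖)).ultrafilter_le_nhds' (𝒰.map _) <| by
      refine Ultrafilter.mem_map.2 (Filter.Eventually.of_forall fun i => ?_)
      rw [mem_closedBall_zero_iff]
      exact (norm_inner_le_norm _ _).trans (by gcongr; exact hv i)
  choose L hLC hL using hlim
  let ℓ : E →L[ℝ] ℝ := LinearMap.mkContinuous
    { toFun := L
      map_add' := fun h h' => tendsto_nhds_unique (hL (h + h')) <| by
        simpa only [inner_add_right] using (hL h).add (hL h')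
      map_smul' := fun c h => tendsto_nhds_unique (hL (c • h)) <| by
        simpa only [real_inner_smul_right, RingHom.id_apply, smul_eq_mul] using
          (hL h).const_mul c } C
    fun h => mem_closedBall_zero_iff.1 (hLC h)
  refine ⟨(InnerProductSpace.toDual ℝ E).symm ℓ, fun h => ?_⟩
  rw [InnerProductSpace.toDual_symm_apply]
  exact hL h

theorem preimage_preimage_iterate_eq {α : Type*} {T Tinv : α → α}
    (hTr : Function.RightInverse Tinv T) (S : α → α) (n : ℕ) (B : Set α) :
    S ⁻¹' (Tinv^[n] ⁻¹' B) = Tinv^[n] ⁻¹' (conjMap T Tinv S n ⁻¹' B) := by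
  ext x
  simp only [Set.mem_preimage, conjMap, (hTr.iterate n) x]

section

variable {μ : Measure X}

theorem exists_integrable_tendsto_measureReal_inter [IsFiniteMeasure μ] {ι : Type*}
    (𝒰 : Ultrafilter ι) {D : ι → Set X} (hD : ∀ i, MeasurableSet (D i)) :
    ∃ g : X → ℝ, Integrable g μ ∧ ∀ A, MeasurableSet A →
      Tendsto (fun i => μ.real (A ∩ D i)) 𝒰 (𝓝 (∫ x in A, g x ∂μ)) := by
  let v : ι → Lp ℝ 2 μ := fun i => indicatorConstLp 2 (hD i) (measure_ne_top μ _) 1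
  have hv : ∀ i, ‖v i‖ ≤ μ.real Set.univ ^ (1 / (2 : ℝ≥0∞).toReal) := fun i =>
    norm_indicatorConstLp_le.trans <| by
      rw [norm_one, one_mul]
      gcongr
      exacts [measure_ne_top μ _, Set.subset_univ _]
  obtain ⟨g, hg⟩ := exists_tendsto_inner_of_norm_le 𝒰 hv
  refine ⟨g, (Lp.memLp g).integrable one_le_two, fun A hA => ?_⟩
  have := hg (indicatorConstLp 2 hA (measure_ne_top μ A) 1)
  rw [real_inner_comm, L2.inner_indicatorConstLp_one] at this
  simpa only [v, L2.real_inner_indicatorConstLp_one_indicatorConstLp_one, Set.inter_comm (D _)]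
    using this

theorem InvMP.ae_eq_comp_of_setIntegral_preimage_eq [SigmaFinite μ] {S : X → X}
    (hS : InvMP μ S) {g : X → ℝ} (hg : Integrable g μ)
    (h : ∀ A, MeasurableSet A → ∫ x in S ⁻¹' A, g x ∂μ = ∫ x in A, g x ∂μ) :
    g ∘ S =ᵐ[μ] g := by
  obtain ⟨hSmp, Sinv, hSinv, hl, hr⟩ := hS
  have hinv : g ∘ Sinv =ᵐ[μ] g := by
    refine ae_eq_of_forall_setIntegral_eq_of_sigmaFinite
      (fun _ _ _ => (hSinv.integrable_comp_of_integrable hg).integrableOn)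
      (fun _ _ _ => hg.integrableOn) fun A hA _ => ?_
    have hA' : Sinv ⁻¹' (S ⁻¹' A) = A := by
      rw [← Set.preimage_comp, hr.comp_eq_id, Set.preimage_id]
    calc ∫ x in A, g (Sinv x) ∂μ = ∫ x in S ⁻¹' A, g x ∂μ.map Sinv := by
          rw [setIntegral_map (hA.preimage hSmp.measurable)
            (by rw [hSinv.map_eq]; exact hg.aestronglyMeasurable) hSinv.aemeasurable, hA']
      _ = ∫ x in A, g x ∂μ := by rw [hSinv.map_eq, h A hA]
  have := hSmp.quasiMeasurePreserving.ae_eq_comp hinv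
  rw [Function.comp_assoc, hl.comp_eq_id, Function.comp_id] at this
  exact this.symm

theorem exists_ae_eq_const_of_ae_eq_comp [IsProbabilityMeasure μ] {𝒮 : Set (X → X)}
    (herg : ∀ A, MeasurableSet A → (∀ S ∈ 𝒮, μ ((S ⁻¹' A) ∆ A) = 0) →
      μ A = 0 ∨ μ A = 1)
    (h𝒮 : ∀ S ∈ 𝒮, Measure.QuasiMeasurePreserving S μ μ) {g : X → ℝ}
    (hg : AEStronglyMeasurable g μ) (hinv : ∀ S ∈ 𝒮, g ∘ S =ᵐ[μ] g) :
    ∃ c, g =ᵐ[μ] fun _ => c := by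
  set G := hg.mk g
  have hG : Measurable G := hg.stronglyMeasurable_mk.measurable
  have hGinv : ∀ S ∈ 𝒮, G ∘ S =ᵐ[μ] G := fun S hS =>
    ((h𝒮 S hS).ae_eq_comp hg.ae_eq_mk).symm.trans ((hinv S hS).trans hg.ae_eq_mk)
  obtain ⟨c, hc⟩ : ∃ c, G =ᵐ[μ] fun _ => c := by
    refine exists_eventuallyEq_const_of_forall_separating MeasurableSet fun U hU => ?_
    have hA : MeasurableSet (G ⁻¹' U) := hG hU
    have hAinv : ∀ S ∈ 𝒮, μ ((S ⁻¹' (G ⁻¹' U)) ∆ (G ⁻¹' U)) = 0 := fun S hS => by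
      refine measure_mono_null (fun x hx => ?_) (ae_iff.1 (hGinv S hS))
      intro hGx
      replace hGx : G (S x) = G x := hGx
      rcases hx with ⟨hx, hx'⟩ | ⟨hx, hx'⟩ <;> exact hx' (by simpa [hGx] using hx)
    exact (herg _ hA hAinv).symm.imp
      (fun h1 => (ae_iff_measure_eq hA.nullMeasurableSet).2 (h1.trans measure_univ.symm))
      measure_eq_zero_iff_ae_notMem.1
  exact ⟨c, hg.ae_eq_mk.trans hc⟩

theorem tendsto_measureReal_inter_of_tendsto_sub_preimage [IsProbabilityMeasure μ]
    {𝒮 : Set (X → X)}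
    (herg : ∀ A, MeasurableSet A → (∀ S ∈ 𝒮, μ ((S ⁻¹' A) ∆ A) = 0) →
      μ A = 0 ∨ μ A = 1)
    (h𝒮 : ∀ S ∈ 𝒮, InvMP μ S) {ι : Type*} {L : Filter ι} {D : ι → Set X}
    (hD : ∀ i, MeasurableSet (D i)) {p : ℝ} (hp : Tendsto (fun i => μ.real (D i)) L (𝓝 p))
    (hasymp : ∀ S ∈ 𝒮, ∀ A, MeasurableSet A →
      Tendsto (fun i => μ.real (A ∩ D i) - μ.real (S ⁻¹' A ∩ D i)) L (𝓝 0))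
    {A : Set X} (hA : MeasurableSet A) :
    Tendsto (fun i => μ.real (A ∩ D i)) L (𝓝 (μ.real A * p)) := by
  rw [tendsto_iff_ultrafilter]
  intro 𝒰 h𝒰
  obtain ⟨g, hgi, hg⟩ := exists_integrable_tendsto_measureReal_inter (μ := μ) 𝒰 hD
  have hginv : ∀ S ∈ 𝒮, g ∘ S =ᵐ[μ] g := fun S hS =>
    (h𝒮 S hS).ae_eq_comp_of_setIntegral_preimage_eq hgi fun B hB =>
      tendsto_nhds_unique (hg _ (hB.preimage (h𝒮 S hS).1.measurable)) <| by
        simpa only [sub_sub_cancel, sub_zero] using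
          (hg B hB).sub ((hasymp S hS B hB).mono_left h𝒰)
  obtain ⟨c, hc⟩ := exists_ae_eq_const_of_ae_eq_comp herg
    (fun S hS => (h𝒮 S hS).1.quasiMeasurePreserving) hgi.aestronglyMeasurable hginv
  have hgA : ∀ B, ∫ x in B, g x ∂μ = μ.real B * c := fun B => by
    rw [integral_congr_ae (ae_restrict_of_ae hc), setIntegral_const, smul_eq_mul]
  have hcp : c = p := by
    have := hg Set.univ MeasurableSet.univ
    simp only [Set.univ_inter, hgA, probReal_univ, one_mul] at this
    exact tendsto_nhds_unique this (hp.mono_left h𝒰)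
  simpa only [hgA, hcp] using hg A hA

theorem abs_measureReal_inter_sub_preimage_inter_le [IsFiniteMeasure μ] {S : X → X}
    (hS : MeasurePreserving S μ μ) {A D : Set X} (hA : MeasurableSet A) (hD : MeasurableSet D) :
    |μ.real (A ∩ D) - μ.real (S ⁻¹' A ∩ D)| ≤ μ.real ((S ⁻¹' D) ∆ D) := by
  have hA' := hA.preimage hS.measurable
  rw [← hS.measureReal_preimage (hA.inter hD).nullMeasurableSet, Set.preimage_inter]
  refine (abs_measureReal_sub_le_measureReal_symmDiff
    (hA'.inter (hD.preimage hS.measurable)).nullMeasurableSet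
    (hA'.inter hD).nullMeasurableSet).trans (measureReal_mono ?_)
  rw [← Set.inter_symmDiff_distrib_left]
  exact Set.inter_subset_right

theorem measureReal_iInter_preimage_iterate_sub {R : X → X} (hR : MeasurePreserving R μ μ)
    {κ : Type*} [Countable κ] {a : ℕ} {n : κ → ℕ} (h : ∀ j, a ≤ n j) {B : κ → Set X}
    (hB : ∀ j, MeasurableSet (B j)) :
    μ.real (⋂ j, R^[n j - a] ⁻¹' B j) = μ.real (⋂ j, R^[n j] ⁻¹' B j) := by
  have hshift : ⋂ j, R^[n j] ⁻¹' B j = R^[a] ⁻¹' ⋂ j, R^[n j - a] ⁻¹' B j := by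
    simp only [Set.preimage_iInter, ← Set.preimage_comp, ← Function.iterate_add,
      Nat.sub_add_cancel (h _)]
  rw [hshift, (hR.iterate a).measureReal_preimage
    (MeasurableSet.iInter fun j => (hB j).preimage (hR.measurable.iterate _)).nullMeasurableSet]

variable {T Tinv : X → X}

theorem measurable_conjMap (hT : Measurable T) (hTinv : Measurable Tinv) {S : X → X}
    (hS : Measurable S) (n : ℕ) : Measurable (conjMap T Tinv S n) :=
  (hTinv.iterate n).comp (hS.comp (hT.iterate n))

theorem HomoclinicAlong.tendsto_measure_preimage_symmDiff [IsFiniteMeasure μ] {S : X → X}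
    {L : Filter ℕ} (h : HomoclinicAlong μ T Tinv S L)
    (hconj : ∀ n, Measurable (conjMap T Tinv S n)) {B : Set X} (hB : MeasurableSet B) :
    Tendsto (fun n => μ ((conjMap T Tinv S n ⁻¹' B) ∆ B)) L (𝓝 0) := by
  have hnorm := h (B.indicator fun _ => 1)
    (memLp_indicator_const 2 hB 1 (Or.inr (measure_ne_top μ B)))
  have key : ∀ n, eLpNorm (fun x => B.indicator (fun _ => (1 : ℝ)) (conjMap T Tinv S n x)
      - B.indicator (fun _ => 1) x) 2 μ =
        μ ((conjMap T Tinv S n ⁻¹' B) ∆ B) ^ (2 : ℝ)⁻¹ :=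
    fun n => by
      rw [show (fun x => B.indicator (fun _ => (1 : ℝ)) (conjMap T Tinv S n x)
        - B.indicator (fun _ => 1) x) = (conjMap T Tinv S n ⁻¹' B).indicator (fun _ => 1)
        - B.indicator (fun _ => 1) from rfl, eLpNorm_indicator_sub_indicator,
        eLpNorm_indicator_const ((hB.preimage (hconj n)).symmDiff hB) two_ne_zero
          ENNReal.ofNat_ne_top]
      simp
  simp only [key] at hnorm
  simpa only [Function.comp_def, ENNReal.rpow_inv_rpow two_ne_zero,
    ENNReal.zero_rpow_of_pos two_pos] using
    ((ENNReal.continuous_rpow_const (y := 2)).tendsto 0).comp hnorm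

theorem tendsto_measureReal_inter_sub_preimage_inter [IsFiniteMeasure μ] (hT : Measurable T)
    (hTinv : MeasurePreserving Tinv μ μ) (hTr : Function.RightInverse Tinv T) {S : X → X}
    (hS : MeasurePreserving S μ μ) (hhom : HomoclinicAlong μ T Tinv S atTop) {ι κ : Type*}
    [Fintype κ] {L : Filter ι} {B : κ → Set X} (hB : ∀ j, MeasurableSet (B j))
    {m : κ → ι → ℕ} (hm : ∀ j, Tendsto (m j) L atTop) {A : Set X} (hA : MeasurableSet A) :
    Tendsto (fun i => μ.real (A ∩ ⋂ j, Tinv^[m j i] ⁻¹' B j)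
      - μ.real (S ⁻¹' A ∩ ⋂ j, Tinv^[m j i] ⁻¹' B j)) L (𝓝 0) := by
  set D : ι → Set X := fun i => ⋂ j, Tinv^[m j i] ⁻¹' B j
  have hconj := measurable_conjMap hT hTinv.measurable hS.measurable
  have hD : ∀ i, MeasurableSet (D i) := fun i =>
    .iInter fun j => (hB j).preimage (hTinv.measurable.iterate _)
  have hbound : ∀ i,
      μ ((S ⁻¹' D i) ∆ D i) ≤ ∑ j, μ ((conjMap T Tinv S (m j i) ⁻¹' B j) ∆ B j) :=
    fun i => calc
      μ ((S ⁻¹' D i) ∆ D i)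
        = μ ((⋂ j, Tinv^[m j i] ⁻¹' (conjMap T Tinv S (m j i) ⁻¹' B j)) ∆ D i) := by
          simp only [D, Set.preimage_iInter, preimage_preimage_iterate_eq hTr]
      _ ≤ μ (⋃ j, Tinv^[m j i] ⁻¹' ((conjMap T Tinv S (m j i) ⁻¹' B j) ∆ B j)) :=
          measure_mono ((Set.iInter_symmDiff_iInter_subset _ _).trans_eq
            (by simp only [Set.preimage_symmDiff]))
      _ ≤ ∑ j, μ (Tinv^[m j i] ⁻¹' ((conjMap T Tinv S (m j i) ⁻¹' B j) ∆ B j)) :=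
          measure_iUnion_fintype_le _ _
      _ = ∑ j, μ ((conjMap T Tinv S (m j i) ⁻¹' B j) ∆ B j) :=
          Finset.sum_congr rfl fun j _ => (hTinv.iterate _).measure_preimage
            (((hB j).preimage (hconj _)).symmDiff (hB j)).nullMeasurableSet
  have hsmall : Tendsto (fun i => μ ((S ⁻¹' D i) ∆ D i)) L (𝓝 0) := by
    refine tendsto_of_tendsto_of_tendsto_of_le_of_le tendsto_const_nhds ?_ (fun _ => zero_le)
      hbound
    simpa using tendsto_finsetSum Finset.univ fun j _ =>
      (hhom.tendsto_measure_preimage_symmDiff hconj (hB j)).comp (hm j)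
  refine squeeze_zero_norm (fun i => abs_measureReal_inter_sub_preimage_inter_le hS hA (hD i)) ?_
  have := (ENNReal.tendsto_toReal ENNReal.zero_ne_top).comp hsmall
  rwa [ENNReal.toReal_zero] at this

def homoclinicGroup (μ : Measure X) (T Tinv : X → X) : Set (X → X) :=
  {S | InvMP μ S ∧ HomoclinicAlong μ T Tinv S atTop}

theorem tendsto_measureReal_iInter_preimage_iterate [IsProbabilityMeasure μ]
    (hT : Measurable T) (hTinv : MeasurePreserving Tinv μ μ) (hTr : Function.RightInverse Tinv T)
    (herg : ∀ A, MeasurableSet A →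
      (∀ S ∈ homoclinicGroup μ T Tinv, μ ((S ⁻¹' A) ∆ A) = 0) → μ A = 0 ∨ μ A = 1)
    {ι : Type*} {L : Filter ι} (k : ℕ) {B : Fin (k + 1) → Set X}
    (hB : ∀ j, MeasurableSet (B j)) {m : Fin (k + 1) → ι → ℕ}
    (hmono : ∀ i, Monotone fun j => m j i)
    (hgaps : ∀ j : Fin k, Tendsto (fun i => m j.succ i - m j.castSucc i) L atTop) :
    Tendsto (fun i => μ.real (⋂ j, Tinv^[m j i] ⁻¹' B j)) L
      (𝓝 (∏ j, μ.real (B j))) := by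
  induction k with
  | zero =>
    have hsingle : ∀ i, ⋂ j, Tinv^[m j i] ⁻¹' B j = Tinv^[m 0 i] ⁻¹' B 0 := fun i =>
      Set.ext fun x => by simp [Fin.forall_fin_one]
    simpa [hsingle, (hTinv.iterate _).measureReal_preimage (hB 0).nullMeasurableSet] using
      tendsto_const_nhds
  | succ k ih =>
    have hle : ∀ i j, m 0 i ≤ m j i := fun i j => hmono i (Fin.zero_le j)
    set D : ι → Set X := fun i => ⋂ j : Fin (k + 1), Tinv^[m j.succ i - m 0 i] ⁻¹' B j.succ
    have hDmeas : ∀ i, MeasurableSet (D i) := fun i =>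
      .iInter fun j => (hB j.succ).preimage (hTinv.measurable.iterate _)
    have hsplit : ∀ i, μ.real (⋂ j, Tinv^[m j i] ⁻¹' B j) = μ.real (B 0 ∩ D i) := by
      intro i
      rw [← measureReal_iInter_preimage_iterate_sub hTinv (hle i) hB]
      congr 1
      ext x
      simp [D, Fin.forall_fin_succ]
    have hD : Tendsto (fun i => μ.real (D i)) L
        (𝓝 (∏ j : Fin (k + 1), μ.real (B j.succ))) := by
      have hshift : ∀ i, μ.real (D i) =
          μ.real (⋂ j : Fin (k + 1), Tinv^[m j.succ i] ⁻¹' B j.succ) := fun i =>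
        measureReal_iInter_preimage_iterate_sub hTinv (fun j : Fin (k + 1) => hle i j.succ)
          fun j => hB j.succ
      simp only [hshift]
      exact ih (B := fun j => B j.succ) (m := fun j => m j.succ) (fun j => hB j.succ)
        (fun i => (hmono i).comp Fin.strictMono_succ.monotone)
        fun j => by simpa only [Fin.succ_castSucc] using hgaps j.succ
    have hgap : Tendsto (fun i => m (0 : Fin (k + 1)).succ i - m 0 i) L atTop := by
      simpa only [Fin.castSucc_zero] using hgaps 0
    have hgrow : ∀ j : Fin (k + 1), Tendsto (fun i => m j.succ i - m 0 i) L atTop := fun j => by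
      refine tendsto_atTop_mono (fun i => Nat.sub_le_sub_right ?_ _) hgap
      exact hmono i (Fin.succ_le_succ_iff.2 (Fin.zero_le j))
    have hasymp : ∀ S ∈ homoclinicGroup μ T Tinv, ∀ A, MeasurableSet A →
        Tendsto (fun i => μ.real (A ∩ D i) - μ.real (S ⁻¹' A ∩ D i)) L (𝓝 0) :=
      fun S hS A hA => tendsto_measureReal_inter_sub_preimage_inter hT hTinv hTr hS.1.1 hS.2
        (fun j : Fin (k + 1) => hB j.succ) hgrow hA
    simp only [hsplit]
    rw [Fin.prod_univ_succ]
    exact tendsto_measureReal_inter_of_tendsto_sub_preimage herg (fun S hS => hS.1) hDmeas hD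
      hasymp (hB 0)

end

theorem mixing_of_all_orders_of_ergodic_homoclinic_general (μ : Measure X) [IsProbabilityMeasure μ]
    (T Tinv : X → X) (hT : MeasurePreserving T μ μ) (hTinv : MeasurePreserving Tinv μ μ)
    (hTr : Function.RightInverse Tinv T)
    (herg : ∀ A : Set X, MeasurableSet A →
      (∀ S : X → X, InvMP μ S → HomoclinicAlong μ T Tinv S atTop →
        μ ((S ⁻¹' A) ∆ A) = 0) → μ A = 0 ∨ μ A = 1)
    (k : ℕ) (B : Fin (k + 1) → Set X) (hB : ∀ j, MeasurableSet (B j))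
    (m : Fin (k + 1) → ℕ → ℕ)
    (hmono : ∀ i, StrictMono (fun j => m j i))
    (hgaps : ∀ j : Fin k, Tendsto (fun i => m j.succ i - m j.castSucc i) atTop atTop) :
    Tendsto (fun i => (μ (⋂ j, Tinv^[m j i] ⁻¹' B j)).toReal) atTop
      (𝓝 (∏ j, (μ (B j)).toReal)) :=
  tendsto_measureReal_iInter_preimage_iterate hT.measurable hTinv hTr
    (fun A hA hinv => herg A hA fun S hS hhom => hinv S ⟨hS, hhom⟩) k hB
    (fun i => (hmono i).monotone) hgaps

/-- A mixing transformation with ergodic homoclinic group `H(T)` is mixing of all orders. -/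
theorem mixing_of_all_orders_of_ergodic_homoclinic (μ : Measure X) [IsProbabilityMeasure μ]
    (T Tinv : X → X) (hT : MeasurePreserving T μ μ) (hTinv : MeasurePreserving Tinv μ μ)
    (hTl : Function.LeftInverse Tinv T) (hTr : Function.RightInverse Tinv T)
    (hmix : ∀ A B : Set X, MeasurableSet A → MeasurableSet B →
      Tendsto (fun n => (μ (A ∩ Tinv^[n] ⁻¹' B)).toReal) atTop
        (𝓝 ((μ A).toReal * (μ B).toReal)))
    (herg : ∀ A : Set X, MeasurableSet A →
      (∀ S : X → X, InvMP μ S → HomoclinicAlong μ T Tinv S atTop →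
        μ ((S ⁻¹' A) ∆ A) = 0) → μ A = 0 ∨ μ A = 1)
    (k : ℕ) (B : Fin (k + 1) → Set X) (hB : ∀ j, MeasurableSet (B j))
    (m : Fin (k + 1) → ℕ → ℕ)
    (hm0 : ∀ i, m 0 i = 0)
    (hmono : ∀ i, StrictMono (fun j => m j i))
    (hgaps : ∀ j : Fin k, Tendsto (fun i => m j.succ i - m j.castSucc i) atTop atTop) :
    Tendsto (fun i => (μ (⋂ j, Tinv^[m j i] ⁻¹' B j)).toReal) atTop
      (𝓝 (∏ j, (μ (B j)).toReal)) :=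
  mixing_of_all_orders_of_ergodic_homoclinic_general μ T Tinv hT hTinv hTr herg k B hB m hmono hgaps
end

section
/- In the unitary group of a separable infinite-dimensional Hilbert space with the strong operator topology, the subgroup of unitaries of the form U ⊕ I (with U acting on a finite-dimensional subspace and I on its orthogonal complement) is dense. -/
/-!
The approximant can be chosen to agree with `U` exactly on `s`. On the finite-dimensional
space `K = span s + U (span s)`, the restriction of `U` to `span s` is an isometry into `K`; it
extends to an isometry of `K`, which is onto because `K` is finite-dimensional. This unitary of
`K`, taken together with the identity on `Kᗮ`, is the required unitary of `H`.
-/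

section

variable {𝕜 E : Type*} [RCLike 𝕜] [NormedAddCommGroup E] [InnerProductSpace 𝕜 E]

namespace LinearIsometryEquiv

variable (K : Submodule 𝕜 E) [K.HasOrthogonalProjection]

noncomputable def extendByIdOnOrthogonal (g : K ≃ₗᵢ[𝕜] K) : E ≃ₗᵢ[𝕜] E :=
  K.orthogonalDecomposition.trans <|
    (g.withLpProdCongr 2 (.refl 𝕜 Kᗮ)).trans K.orthogonalDecomposition.symm

variable {K}

theorem extendByIdOnOrthogonal_apply_coe (g : K ≃ₗᵢ[𝕜] K) (x : K) :
    extendByIdOnOrthogonal K g x = g x := by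
  simp [extendByIdOnOrthogonal]

theorem extendByIdOnOrthogonal_apply_of_mem_orthogonal (g : K ≃ₗᵢ[𝕜] K) {x : E}
    (hx : x ∈ Kᗮ) : extendByIdOnOrthogonal K g x = x := by
  simp [extendByIdOnOrthogonal, Submodule.orthogonalProjectionOnto_apply_of_mem_orthogonal hx,
    (Submodule.starProjection_apply_eq_zero_iff (K := K)).mpr hx]

end LinearIsometryEquiv

namespace LinearIsometry

theorem exists_linearIsometryEquiv_extend_of_finiteDimensional {S : Submodule 𝕜 E}
    [FiniteDimensional 𝕜 S] (L : S →ₗᵢ[𝕜] E) :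
    ∃ (K : Submodule 𝕜 E) (e : E ≃ₗᵢ[𝕜] E),
      FiniteDimensional 𝕜 K ∧ (∀ x ∈ Kᗮ, e x = x) ∧ ∀ x : S, e x = L x := by
  set K := S ⊔ LinearMap.range L.toLinearMap
  have hSK : S ≤ K := le_sup_left
  have : CompleteSpace K := FiniteDimensional.complete 𝕜 K
  let LK : S.comap K.subtype →ₗᵢ[𝕜] K :=
    { toLinearMap := LinearMap.codRestrict K
        (L.toLinearMap ∘ₗ (Submodule.comapSubtypeEquivOfLe hSK).toLinearMap)
        fun x => le_sup_right (a := S) (LinearMap.mem_range_self _ _)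
      norm_map' := fun x => L.norm_map _ }
  let g : K ≃ₗᵢ[𝕜] K := LK.extend.toLinearIsometryEquiv rfl
  refine ⟨K, .extendByIdOnOrthogonal K g, inferInstance,
    fun x hx => LinearIsometryEquiv.extendByIdOnOrthogonal_apply_of_mem_orthogonal g hx,
    fun x => ?_⟩
  rw [LinearIsometryEquiv.extendByIdOnOrthogonal_apply_coe g ⟨x, hSK x.2⟩]
  exact congrArg Subtype.val (LK.extend_apply ⟨⟨x, hSK x.2⟩, x.2⟩)

end LinearIsometry

end

theorem finiteDimensional_unitaries_SOT_dense_general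
    {H : Type*} [NormedAddCommGroup H] [InnerProductSpace ℂ H] [CompleteSpace H]
    (U : H →L[ℂ] H) (hU : U ∈ unitary (H →L[ℂ] H))
    (ε : ℝ) (hε : 0 < ε) (s : Finset H) :
    ∃ V : H →L[ℂ] H, V ∈ unitary (H →L[ℂ] H) ∧
      (∃ K : Submodule ℂ H, FiniteDimensional ℂ K ∧ ∀ x ∈ Kᗮ, V x = x) ∧
      ∀ v ∈ s, ‖V v - U v‖ < ε := by
  let S := Submodule.span ℂ (s : Set H)
  let US : S →ₗᵢ[ℂ] H := (Unitary.linearIsometryEquiv ⟨U, hU⟩).toLinearIsometry.comp S.subtypeₗᵢ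
  obtain ⟨K, e, hK, he_fix, he_eq⟩ := US.exists_linearIsometryEquiv_extend_of_finiteDimensional
  refine ⟨e, (Unitary.linearIsometryEquiv.symm e).2, ⟨K, hK, he_fix⟩, fun v hv => ?_⟩
  have he_eq_U : e v = U v := he_eq ⟨v, Submodule.subset_span hv⟩
  simpa [he_eq_U] using hε

/-- In the unitary group of a separable infinite-dimensional complex Hilbert space, the
subgroup of unitaries of the form `U ⊕ I` (acting as the identity on the orthogonal
complement of a finite-dimensional subspace) is dense in the strong operator topology:
every unitary can be approximated on any finite set of vectors. -/
theorem finiteDimensional_unitaries_SOT_dense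
    {H : Type*} [NormedAddCommGroup H] [InnerProductSpace ℂ H] [CompleteSpace H]
    [TopologicalSpace.SeparableSpace H] (hinf : ¬ FiniteDimensional ℂ H)
    (U : H →L[ℂ] H) (hU : U ∈ unitary (H →L[ℂ] H))
    (ε : ℝ) (hε : 0 < ε) (s : Finset H) :
    ∃ V : H →L[ℂ] H, V ∈ unitary (H →L[ℂ] H) ∧
      (∃ K : Submodule ℂ H, FiniteDimensional ℂ K ∧ ∀ x ∈ Kᗮ, V x = x) ∧
      ∀ v ∈ s, ‖V v - U v‖ < ε :=
  finiteDimensional_unitaries_SOT_dense_general U hU ε hε s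
end

section
/- Let T be ergodic measure-preserving on a probability space and suppose a group G of measure-preserving transformations satisfies: for each S ∈ G and each bounded measurable f, (1/N)Σ_{n=1}^N ‖f ∘ (T^{-n} S T^n) − f‖₂ → 0. If G acts ergodically, then T is weakly mixing. -/
open MeasureTheory Filter Topology

variable {X : Type*} [MeasurableSpace X]

open scoped symmDiff

/-!
Let `A ⊆ X × X` be `T × T`-invariant and `S ∈ G`. Since `T^n ∘ (T^{-n} S T^n) = S ∘ T^n`, the sets
`(id × T^{-n} S T^n)⁻¹ A ∆ A` are the pullbacks of `(id × S)⁻¹ A ∆ A` under `T^n × T^n`, so they all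
have the same measure `d`. On each fibre `{x} × X` their measures are bounded by the `L²` distances
of the hypothesis, applied to the indicator of the fibre of `A`, so their Cesàro means tend to `0`
fibrewise, and by dominated convergence `d = 0`. Thus `A` is a.e. invariant under `id × S` and, by
symmetry, under `S × id`. Ergodicity of `G` then makes the fibre measures of `A` a.e. constant, so
`A` meets every rectangle `B × C` in measure `μ(A) μ(B) μ(C)`. Hence the restriction of `μ × μ` to
`A` is `μ(A) • (μ × μ)`, and evaluating it at `A` gives `μ(A) = μ(A)²`.
-/

variable {Y : Type*} [MeasurableSpace Y]

def ErgodicFamily (μ : Measure X) (G : Set (X → X)) : Prop :=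
  ∀ A : Set X, MeasurableSet A → (∀ g ∈ G, μ ((g ⁻¹' A) ∆ A) = 0) → μ A = 0 ∨ μ A = 1

noncomputable def cesaroMean (a : ℕ → ℝ) (N : ℕ) : ℝ :=
  (N : ℝ)⁻¹ * ∑ n ∈ Finset.Icc 1 N, a n

def CesaroWeaklyHomoclinic (μ : Measure X) (T Tinv S : X → X) : Prop :=
  ∀ f : X → ℝ, Measurable f → (∃ C : ℝ, ∀ x, |f x| ≤ C) →
    Tendsto (cesaroMean fun n => (eLpNorm (fun x => f (conjMap T Tinv S n x) - f x) 2 μ).toReal)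
      atTop (𝓝 0)

lemma cesaroMean_mono {a b : ℕ → ℝ} (h : ∀ n, a n ≤ b n) (N : ℕ) :
    cesaroMean a N ≤ cesaroMean b N :=
  mul_le_mul_of_nonneg_left (Finset.sum_le_sum fun n _ => h n) (by positivity)

lemma cesaroMean_const {c : ℝ} {N : ℕ} (hN : N ≠ 0) : cesaroMean (fun _ => c) N = c := by
  simp [cesaroMean, hN]

lemma cesaroMean_nonneg {a : ℕ → ℝ} (h : ∀ n, 0 ≤ a n) (N : ℕ) : 0 ≤ cesaroMean a N := by
  simpa [cesaroMean] using cesaroMean_mono h N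

lemma cesaroMean_le {a : ℕ → ℝ} {M : ℝ} (h : ∀ n, a n ≤ M) (hM : 0 ≤ M) (N : ℕ) :
    cesaroMean a N ≤ M := by
  rcases eq_or_ne N 0 with rfl | hN
  · simpa [cesaroMean] using hM
  · simpa [cesaroMean_const hN] using cesaroMean_mono h N

lemma tendsto_cesaroMean_const (c : ℝ) : Tendsto (cesaroMean fun _ => c) atTop (𝓝 c) :=
  tendsto_const_nhds.congr' <| (eventually_ne_atTop 0).mono fun _ hN => (cesaroMean_const hN).symm

lemma integral_cesaroMean {μ : Measure X} {f : ℕ → X → ℝ} (hf : ∀ n, Integrable (f n) μ) (N : ℕ) :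
    ∫ x, cesaroMean (fun n => f n x) N ∂μ = cesaroMean (fun n => ∫ x, f n x ∂μ) N := by
  rw [cesaroMean, ← integral_finsetSum _ fun n _ => hf n, ← integral_const_mul]
  rfl

lemma eLpNorm_indicator_comp_sub_indicator (μ : Measure X) {B : Set X} (hB : MeasurableSet B)
    {c : X → X} (hc : Measurable c) :
    eLpNorm (fun y => B.indicator 1 (c y) - B.indicator (1 : X → ℝ) y) 2 μ
      = μ ((c ⁻¹' B) ∆ B) ^ (1 / 2 : ℝ) := by
  have hnorm : ∀ y, ‖B.indicator 1 (c y) - B.indicator (1 : X → ℝ) y‖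
      = ‖((c ⁻¹' B) ∆ B).indicator (fun _ => (1 : ℝ)) y‖ := by
    intro y
    by_cases h1 : c y ∈ B <;> by_cases h2 : y ∈ B <;> simp [h1, h2, Set.mem_symmDiff]
  rw [eLpNorm_congr_norm_ae (Eventually.of_forall hnorm),
    eLpNorm_indicator_const ((hB.preimage hc).symmDiff hB) two_ne_zero ENNReal.ofNat_ne_top]
  simp

lemma measureReal_preimage_symmDiff_le_eLpNorm (μ : Measure X) [IsProbabilityMeasure μ]
    {B : Set X} (hB : MeasurableSet B) {c : X → X} (hc : Measurable c) :
    μ.real ((c ⁻¹' B) ∆ B)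
      ≤ (eLpNorm (fun y => B.indicator 1 (c y) - B.indicator (1 : X → ℝ) y) 2 μ).toReal := by
  rw [eLpNorm_indicator_comp_sub_indicator μ hB hc, ← ENNReal.toReal_rpow, ← Real.sqrt_eq_rpow,
    ← measureReal_def, Real.le_sqrt measureReal_nonneg measureReal_nonneg]
  exact pow_le_of_le_one measureReal_nonneg measureReal_le_one two_ne_zero

lemma CesaroWeaklyHomoclinic.tendsto_cesaroMean_measureReal_symmDiff {μ : Measure X}
    [IsProbabilityMeasure μ] {T Tinv S : X → X} (hS : CesaroWeaklyHomoclinic μ T Tinv S)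
    (hconj : ∀ n, Measurable (conjMap T Tinv S n)) {B : Set X} (hB : MeasurableSet B) :
    Tendsto (cesaroMean fun n => μ.real ((conjMap T Tinv S n ⁻¹' B) ∆ B)) atTop (𝓝 0) := by
  have hbdd : ∀ x, |B.indicator (1 : X → ℝ) x| ≤ 1 := fun x => by
    by_cases hx : x ∈ B <;> simp [hx]
  refine squeeze_zero (cesaroMean_nonneg fun n => measureReal_nonneg)
    (cesaroMean_mono fun n => ?_) (hS _ (measurable_one.indicator hB) ⟨1, hbdd⟩)
  exact measureReal_preimage_symmDiff_le_eLpNorm μ hB (hconj n)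

lemma integral_measureReal_prodMk_left (μ : Measure X) (ν : Measure Y) [SFinite ν]
    {s : Set (X × Y)} (hs : MeasurableSet s) (h2s : (μ.prod ν) s ≠ ⊤) :
    ∫ x, ν.real (Prod.mk x ⁻¹' s) ∂μ = (μ.prod ν).real s := by
  simp_rw [measureReal_def]
  rw [integral_toReal (measurable_measure_prodMk_left hs).aemeasurable
    (Measure.ae_measure_lt_top hs h2s), Measure.prod_apply hs]

lemma tendsto_cesaroMean_measureReal_prod (μ : Measure X) (ν : Measure Y) [IsFiniteMeasure μ]
    [IsFiniteMeasure ν] {C : ℕ → Set (X × Y)} (hC : ∀ n, MeasurableSet (C n))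
    (h : ∀ᵐ x ∂μ, Tendsto (cesaroMean fun n => ν.real (Prod.mk x ⁻¹' C n)) atTop (𝓝 0)) :
    Tendsto (cesaroMean fun n => (μ.prod ν).real (C n)) atTop (𝓝 0) := by
  have hint : ∀ n, Integrable (fun x => ν.real (Prod.mk x ⁻¹' C n)) μ := fun n =>
    Measure.integrable_measure_prodMk_left (hC n) (measure_ne_top _ _)
  have hbound : ∀ N x, ‖cesaroMean (fun n => ν.real (Prod.mk x ⁻¹' C n)) N‖ ≤ ν.real Set.univ :=
    fun N x => by
      rw [Real.norm_of_nonneg (cesaroMean_nonneg (fun n => measureReal_nonneg) N)]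
      exact cesaroMean_le (fun n => measureReal_mono (Set.subset_univ _)) measureReal_nonneg N
  have hmeas : ∀ N,
      AEStronglyMeasurable (fun x => cesaroMean (fun n => ν.real (Prod.mk x ⁻¹' C n)) N) μ :=
    fun N => ((Finset.measurable_sum _ fun n _ =>
      (measurable_measure_prodMk_left (hC n)).ennreal_toReal).const_mul _).aestronglyMeasurable
  have hDCT := tendsto_integral_of_dominated_convergence _ hmeas (integrable_const _)
    (fun N => Eventually.of_forall (hbound N)) h
  simpa only [integral_cesaroMean hint, integral_zero,
    integral_measureReal_prodMk_left μ ν (hC _) (measure_ne_top _ _)] using hDCT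

lemma preimage_prodMap_id_conjMap {α : Type*} {T Tinv S : α → α}
    (hTr : Function.RightInverse Tinv T) {A : Set (α × α)} {n : ℕ}
    (hA : Prod.map T^[n] T^[n] ⁻¹' A = A) :
    Prod.map id (conjMap T Tinv S n) ⁻¹' A = Prod.map T^[n] T^[n] ⁻¹' (Prod.map id S ⁻¹' A) := by
  conv_lhs => rw [← hA]
  ext ⟨x, y⟩
  show (T^[n] x, T^[n] (Tinv^[n] (S (T^[n] y)))) ∈ A ↔ (T^[n] x, S (T^[n] y)) ∈ A
  rw [hTr.iterate n]

lemma CesaroWeaklyHomoclinic.preimage_prodMap_snd_ae_eq {μ : Measure X} [IsProbabilityMeasure μ]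
    {T Tinv S : X → X} (hS : CesaroWeaklyHomoclinic μ T Tinv S) (hT : MeasurePreserving T μ μ)
    (hTinv : Measurable Tinv) (hTr : Function.RightInverse Tinv T) (hSm : Measurable S)
    {A : Set (X × X)} (hA : MeasurableSet A) (hAinv : Prod.map T T ⁻¹' A = A) :
    Prod.map id S ⁻¹' A =ᵐ[μ.prod μ] A := by
  set E := (Prod.map id S ⁻¹' A) ∆ A
  have hE : MeasurableSet E := (hA.preimage (measurable_id.prodMap hSm)).symmDiff hA
  have hconj : ∀ n, Measurable (conjMap T Tinv S n) := fun n =>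
    (hTinv.iterate n).comp (hSm.comp (hT.measurable.iterate n))
  set C : ℕ → Set (X × X) := fun n => (Prod.map id (conjMap T Tinv S n) ⁻¹' A) ∆ A
  have hC : ∀ n, MeasurableSet (C n) := fun n =>
    (hA.preimage (measurable_id.prodMap (hconj n))).symmDiff hA
  have hCE : ∀ n, (μ.prod μ).real (C n) = (μ.prod μ).real E := by
    intro n
    have hAn : Prod.map T^[n] T^[n] ⁻¹' A = A := by
      rw [← Prod.map_iterate, Set.preimage_iterate_eq]
      exact Function.iterate_fixed hAinv n
    have hCn : C n = Prod.map T^[n] T^[n] ⁻¹' E := by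
      rw [Set.preimage_symmDiff, ← preimage_prodMap_id_conjMap hTr hAn, hAn]
    rw [hCn, ((hT.iterate n).prod (hT.iterate n)).measureReal_preimage hE.nullMeasurableSet]
  have hfib : ∀ x, Tendsto (cesaroMean fun n => μ.real (Prod.mk x ⁻¹' C n)) atTop (𝓝 0) :=
    fun x => by
      have hfiber : ∀ n, Prod.mk x ⁻¹' C n
          = (conjMap T Tinv S n ⁻¹' (Prod.mk x ⁻¹' A)) ∆ (Prod.mk x ⁻¹' A) := fun n => rfl
      simp only [hfiber]
      exact hS.tendsto_cesaroMean_measureReal_symmDiff hconj (measurable_prodMk_left hA)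
  have hlim := tendsto_cesaroMean_measureReal_prod μ μ hC (Eventually.of_forall hfib)
  simp only [hCE] at hlim
  have hE0 : (μ.prod μ).real E = 0 := tendsto_nhds_unique (tendsto_cesaroMean_const _) hlim
  exact measure_symmDiff_eq_zero_iff.1 ((measureReal_eq_zero_iff).1 hE0)

lemma ErgodicFamily.exists_ae_eq_const {μ : Measure X} [IsProbabilityMeasure μ]
    {G : Set (X → X)} (hG : ErgodicFamily μ G) {Z : Type*} [MeasurableSpace Z] [Nonempty Z]
    [MeasurableSpace.CountablySeparated Z] {w : X → Z} (hw : Measurable w)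
    (hinv : ∀ g ∈ G, w ∘ g =ᵐ[μ] w) : ∃ c, w =ᵐ[μ] Function.const X c := by
  refine exists_eventuallyEq_const_of_forall_separating MeasurableSet fun U hU => ?_
  have hinvU : ∀ g ∈ G, μ ((g ⁻¹' (w ⁻¹' U)) ∆ (w ⁻¹' U)) = 0 := fun g hg =>
    measure_symmDiff_eq_zero_iff.2 <| ((hinv g hg).mono fun x hx => by
      rw [← Set.preimage_comp, Set.mem_preimage, Set.mem_preimage, hx]).set_eq
  rcases hG _ (hw hU) hinvU with h | h
  · exact Or.inr (measure_eq_zero_iff_ae_notMem.1 h)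
  · exact Or.inl ((mem_ae_iff_prob_eq_one (hw hU)).2 h)

lemma ErgodicFamily.measure_inter_prod_univ {μ : Measure X} [IsProbabilityMeasure μ]
    {G : Set (X → X)} (hG : ErgodicFamily μ G) {ν : Measure Y} [SFinite ν] {E : Set (X × Y)}
    (hE : MeasurableSet E) (hinv : ∀ S ∈ G, Prod.map S id ⁻¹' E =ᵐ[μ.prod ν] E)
    {B : Set X} (hB : MeasurableSet B) :
    (μ.prod ν) (E ∩ B ×ˢ Set.univ) = μ B * (μ.prod ν) E := by
  obtain ⟨c, hc⟩ := hG.exists_ae_eq_const (measurable_measure_prodMk_left hE) fun S hS => by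
    filter_upwards [Measure.measure_ae_null_of_prod_null
      (measure_symmDiff_eq_zero_iff.2 (hinv S hS))] with x hx
    exact measure_congr (measure_symmDiff_eq_zero_iff.1
      (hx : ν ((Prod.mk (S x) ⁻¹' E) ∆ (Prod.mk x ⁻¹' E)) = 0))
  have hslab : ∀ B, MeasurableSet B → (μ.prod ν) (E ∩ B ×ˢ Set.univ) = c * μ B := by
    intro B hB
    rw [← Measure.restrict_apply hE, ← Measure.restrict_prod_eq_prod_univ, Measure.prod_apply hE,
      lintegral_congr_ae (ae_restrict_of_ae hc)]
    exact setLIntegral_const B c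
  have hE_eq := hslab Set.univ MeasurableSet.univ
  rw [Set.univ_prod_univ, Set.inter_univ, measure_univ, mul_one] at hE_eq
  rw [hslab B hB, hE_eq, mul_comm]

lemma ErgodicFamily.prod {μ : Measure X} [IsProbabilityMeasure μ] {ν : Measure Y}
    [IsProbabilityMeasure ν] {G : Set (X → X)} {H : Set (Y → Y)} (hG : ErgodicFamily μ G)
    (hH : ErgodicFamily ν H) :
    ErgodicFamily (μ.prod ν) ((fun S => Prod.map S id) '' G ∪ (fun S => Prod.map id S) '' H) := by
  intro A hA hinv
  have hfst : ∀ S ∈ G, Prod.map S id ⁻¹' A =ᵐ[μ.prod ν] A := fun S hS =>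
    measure_symmDiff_eq_zero_iff.1 (hinv _ (Or.inl ⟨S, hS, rfl⟩))
  have hsnd : ∀ S ∈ H,
      Prod.map S id ⁻¹' (Prod.swap ⁻¹' A) =ᵐ[ν.prod μ] Prod.swap ⁻¹' A := fun S hS =>
    Measure.measurePreserving_swap.quasiMeasurePreserving.preimage_ae_eq
      (measure_symmDiff_eq_zero_iff.1 (hinv _ (Or.inr ⟨S, hS, rfl⟩)))
  have hrect : ∀ B C, MeasurableSet B → MeasurableSet C →
      (μ.prod ν) (A ∩ B ×ˢ C) = (μ.prod ν) A * (μ.prod ν) (B ×ˢ C) := by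
    intro B C hB hC
    have hAC : MeasurableSet (A ∩ Set.univ ×ˢ C) := hA.inter (MeasurableSet.univ.prod hC)
    have hinvAC : ∀ S ∈ G,
        Prod.map S id ⁻¹' (A ∩ Set.univ ×ˢ C) =ᵐ[μ.prod ν] (A ∩ Set.univ ×ˢ C : Set (X × Y)) :=
        fun S hS => by
      rw [Set.preimage_inter, Set.preimage_prod_map_prod, Set.preimage_univ, Set.preimage_id]
      exact ae_eq_set_inter (hfst S hS) (ae_eq_refl _)
    have hmeasAC : (μ.prod ν) (A ∩ Set.univ ×ˢ C) = ν C * (μ.prod ν) A := by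
      rw [← Measure.measurePreserving_swap.measure_preimage hAC.nullMeasurableSet,
        Set.preimage_inter, Set.preimage_swap_prod,
        hH.measure_inter_prod_univ (hA.preimage measurable_swap) hsnd hC,
        Measure.measurePreserving_swap.measure_preimage hA.nullMeasurableSet]
    calc (μ.prod ν) (A ∩ B ×ˢ C) = (μ.prod ν) (A ∩ Set.univ ×ˢ C ∩ B ×ˢ Set.univ) := by
          rw [Set.inter_assoc, Set.prod_inter_prod, Set.univ_inter, Set.inter_univ]
      _ = μ B * (ν C * (μ.prod ν) A) := by rw [hG.measure_inter_prod_univ hAC hinvAC hB, hmeasAC]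
      _ = (μ.prod ν) A * (μ.prod ν) (B ×ˢ C) := by rw [Measure.prod_prod]; ring
  have hrestrict : (μ.prod ν).restrict A = (μ.prod ν) A • μ.prod ν :=
    Measure.ext_prod fun hB hC => by
      rw [Measure.restrict_apply (hB.prod hC), Set.inter_comm, hrect _ _ hB hC,
        Measure.smul_apply, smul_eq_mul]
  have hsq : (μ.prod ν) A * (μ.prod ν) A = (μ.prod ν) A := by
    simpa [Measure.restrict_apply_self] using (congrArg (· A) hrestrict).symm
  rcases eq_or_ne ((μ.prod ν) A) 0 with h0 | h0
  · exact Or.inl h0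
  · exact Or.inr ((ENNReal.mul_eq_left h0 (measure_ne_top _ _)).1 hsq)

theorem weakly_mixing_of_ergodic_weak_homoclinic_group_general
    (μ : Measure X) [IsProbabilityMeasure μ]
    (T Tinv : X → X) (hT : Ergodic T μ) (hTinv : MeasurePreserving Tinv μ μ)
    (hTr : Function.RightInverse Tinv T)
    (G : Set (X → X)) (hGmp : ∀ g ∈ G, InvMP μ g)
    (hGwh : ∀ S ∈ G, ∀ f : X → ℝ, Measurable f → (∃ C : ℝ, ∀ x, |f x| ≤ C) →
      Tendsto (fun N : ℕ => (N : ℝ)⁻¹ *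
          ∑ n ∈ Finset.Icc 1 N,
            (eLpNorm (fun x => f (conjMap T Tinv S n x) - f x) 2 μ).toReal)
        atTop (𝓝 0))
    (hGerg : ∀ A : Set X, MeasurableSet A → (∀ g ∈ G, μ ((g ⁻¹' A) ∆ A) = 0) →
      μ A = 0 ∨ μ A = 1) :
    Ergodic (fun p : X × X => (T p.1, T p.2)) (μ.prod μ) := by
  refine ⟨hT.toMeasurePreserving.prod hT.toMeasurePreserving, ⟨fun A hA hAinv => ?_⟩⟩
  have hsnd : ∀ {B : Set (X × X)}, MeasurableSet B → Prod.map T T ⁻¹' B = B →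
      ∀ S ∈ G, Prod.map id S ⁻¹' B =ᵐ[μ.prod μ] B := fun hB hBinv S hS =>
    CesaroWeaklyHomoclinic.preimage_prodMap_snd_ae_eq (hGwh S hS) hT.toMeasurePreserving
      hTinv.measurable hTr (hGmp S hS).1.measurable hB hBinv
  have hswap : Prod.map T T ⁻¹' (Prod.swap ⁻¹' A) = Prod.swap ⁻¹' A :=
    congrArg (Prod.swap ⁻¹' ·) hAinv
  have hfst : ∀ S ∈ G, Prod.map S id ⁻¹' A =ᵐ[μ.prod μ] A := fun S hS =>
    Measure.measurePreserving_swap.quasiMeasurePreserving.preimage_ae_eq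
      (hsnd (hA.preimage measurable_swap) hswap S hS)
  have h01 := ErgodicFamily.prod hGerg hGerg A hA <| by
    rintro _ (⟨S, hS, rfl⟩ | ⟨S, hS, rfl⟩)
    · exact measure_symmDiff_eq_zero_iff.2 (hfst S hS)
    · exact measure_symmDiff_eq_zero_iff.2 (hsnd hA hAinv S hS)
  rwa [eventuallyConst_set', ae_eq_empty, ae_eq_univ, prob_compl_eq_zero_iff hA]

/-- If an ergodically acting group `G` of measure-preserving transformations consists of
Cesàro-weakly-homoclinic elements for the ergodic transformation `T`, then `T` is weakly
mixing, i.e. `T × T` is ergodic. -/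
theorem weakly_mixing_of_ergodic_weak_homoclinic_group
    (μ : Measure X) [IsProbabilityMeasure μ]
    (T Tinv : X → X) (hT : Ergodic T μ) (hTinv : MeasurePreserving Tinv μ μ)
    (hTl : Function.LeftInverse Tinv T) (hTr : Function.RightInverse Tinv T)
    (G : Set (X → X)) (hGmp : ∀ g ∈ G, InvMP μ g)
    (hGwh : ∀ S ∈ G, ∀ f : X → ℝ, Measurable f → (∃ C : ℝ, ∀ x, |f x| ≤ C) →
      Tendsto (fun N : ℕ => (N : ℝ)⁻¹ *
          ∑ n ∈ Finset.Icc 1 N,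
            (eLpNorm (fun x => f (conjMap T Tinv S n x) - f x) 2 μ).toReal)
        atTop (𝓝 0))
    (hGerg : ∀ A : Set X, MeasurableSet A → (∀ g ∈ G, μ ((g ⁻¹' A) ∆ A) = 0) →
      μ A = 0 ∨ μ A = 1) :
    Ergodic (fun p : X × X => (T p.1, T p.2)) (μ.prod μ) :=
  weakly_mixing_of_ergodic_weak_homoclinic_group_general μ T Tinv hT hTinv hTr G hGmp hGwh hGerg
end
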